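/- Let β be a quantum root of a Kac–Moody root system and let i ∈ I index a simple root. Then r_i(β) is a quantum root if and only if |⟨β∨, α_i⟩| ≤ 1. -/

import Mathlib

structure KMD (I : Type) [Fintype I] [DecidableEq I] where
  A : I → I → ℤ
  A_diag : ∀ i, A i i = 2
  A_offdiag : ∀ i j, i ≠ j → A i j ≤ 0
  A_symm_zero : ∀ i j, A i j = 0 → A j i = 0
  X : Type
  Y : Type
  [addX : AddCommGroup X]
  [addY : AddCommGroup Y]
  P : Y →ₗ[ℤ] X →ₗ[ℤ] ℤ
  α : I → X
  αv : I → Y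
  indep_α : LinearIndependent ℤ α
  indep_αv : LinearIndependent ℤ αv
  pair_simple : ∀ i j, P (αv i) (α j) = A i j

attribute [instance] KMD.addX KMD.addY

namespace KMD

open scoped Classical

variable {I : Type} [Fintype I] [DecidableEq I] (S : KMD I)

/-- The simple reflection on `X`, as a linear map. -/
def preReflX (i : I) : S.X →ₗ[ℤ] S.X :=
  LinearMap.id - (S.P (S.αv i)).smulRight (S.α i)

lemma preReflX_apply (i : I) (x : S.X) :
    S.preReflX i x = x - S.P (S.αv i) x • S.α i := by
  simp [preReflX]

lemma preReflX_invol (i : I) : Function.Involutive (S.preReflX i) := by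
  intro x
  have h2 : S.P (S.αv i) (S.α i) = 2 := by rw [S.pair_simple i i, S.A_diag i]
  have hp : S.P (S.αv i) (x - S.P (S.αv i) x • S.α i) = -(S.P (S.αv i) x) := by
    rw [map_sub, LinearMap.map_smul, h2, smul_eq_mul]; ring
  simp only [S.preReflX_apply, hp]
  module

/-- The simple reflection `r_i` acting on `X`. -/
def reflX (i : I) : S.X ≃ₗ[ℤ] S.X :=
  { S.preReflX i with
    invFun := S.preReflX i
    left_inv := S.preReflX_invol i
    right_inv := S.preReflX_invol i }

def preReflY (i : I) : S.Y →ₗ[ℤ] S.Y :=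
  LinearMap.id - (S.P.flip (S.α i)).smulRight (S.αv i)

lemma preReflY_apply (i : I) (y : S.Y) :
    S.preReflY i y = y - S.P y (S.α i) • S.αv i := by
  simp [preReflY]

lemma preReflY_invol (i : I) : Function.Involutive (S.preReflY i) := by
  intro y
  have h2 : S.P (S.αv i) (S.α i) = 2 := by rw [S.pair_simple i i, S.A_diag i]
  have hp : S.P (y - S.P y (S.α i) • S.αv i) (S.α i) = -(S.P y (S.α i)) := by
    rw [map_sub, LinearMap.map_smul, LinearMap.sub_apply, LinearMap.smul_apply, h2,
      smul_eq_mul]; ring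
  simp only [S.preReflY_apply, hp]
  module

/-- The simple reflection `r_i` acting contragrediently on `Y`. -/
def reflY (i : I) : S.Y ≃ₗ[ℤ] S.Y :=
  { S.preReflY i with
    invFun := S.preReflY i
    left_inv := S.preReflY_invol i
    right_inv := S.preReflY_invol i }

/-- The product `r_{i_1} ⋯ r_{i_k}` of simple reflections on `X` indexed by a word. -/
def wordX (l : List I) : S.X ≃ₗ[ℤ] S.X := (l.map S.reflX).prod

def wordY (l : List I) : S.Y ≃ₗ[ℤ] S.Y := (l.map S.reflY).prod

/-- Real roots: the Weyl-group orbit of the simple roots. -/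
def IsRoot (x : S.X) : Prop := ∃ p : List I × I, x = S.wordX p.1 (S.α p.2)

def IsPosRoot (x : S.X) : Prop :=
  S.IsRoot x ∧ ∃ c : I → ℕ, x = ∑ i, (c i : ℤ) • S.α i

def IsNegRoot (x : S.X) : Prop :=
  S.IsRoot x ∧ ∃ c : I → ℕ, x = -∑ i, (c i : ℤ) • S.α i

/-- The coroot `β∨` associated to a real root `β`. -/
noncomputable def coroot (x : S.X) : S.Y :=
  if h : S.IsRoot x then S.wordY h.choose.1 (S.αv h.choose.2) else 0

/-- The reflection `s_β` associated to a real root `β`, acting on `X`. -/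
noncomputable def sReflX (x : S.X) : S.X ≃ₗ[ℤ] S.X :=
  if h : S.IsRoot x then S.wordX h.choose.1 * S.reflX h.choose.2 * (S.wordX h.choose.1)⁻¹
  else 1

/-- The reflection `s_β` acting on `Y`. -/
noncomputable def sReflY (x : S.X) : S.Y ≃ₗ[ℤ] S.Y :=
  if h : S.IsRoot x then S.wordY h.choose.1 * S.reflY h.choose.2 * (S.wordY h.choose.1)⁻¹
  else 1

/-- The inversion set `Inv(w) = {γ ∈ Φ₊ | w γ ∈ Φ₋}`. -/
def InvSet (w : S.X ≃ₗ[ℤ] S.X) : Set S.X := {γ | S.IsPosRoot γ ∧ S.IsNegRoot (w γ)}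

/-- Height of an element of the coroot lattice. -/
noncomputable def htv (y : S.Y) : ℤ :=
  if h : ∃ c : I → ℤ, y = ∑ i, c i • S.αv i then ∑ i, h.choose i else 0

/-- Coordinates of an element of the coroot lattice in the basis of simple coroots. -/
noncomputable def coeffY (y : S.Y) : I → ℤ :=
  if h : ∃ c : I → ℤ, y = ∑ i, c i • S.αv i then h.choose else 0

/-- A quantum root: a positive real root `β` with `⟨β∨, γ⟩ = 1` for every
`γ ∈ Inv(s_β) \ {β}`. -/
def IsQuantum (β : S.X) : Prop :=
  S.IsPosRoot β ∧ ∀ γ ∈ S.InvSet (S.sReflX β), γ ≠ β → S.P (S.coroot β) γ = 1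

/-- Word length with respect to the simple reflections. -/
noncomputable def len (w : S.X ≃ₗ[ℤ] S.X) : ℕ :=
  sInf {n | ∃ l : List I, l.length =  n ∧ w = S.wordX l}

/-- The Dynkin diagram of the generalized Cartan matrix, as a simple graph. -/
def dynkinGraph : SimpleGraph I where
  Adj i j := i ≠ j ∧ S.A i j ≠ 0
  symm := by
    constructor
    rintro i j ⟨hne, hz⟩
    exact ⟨hne.symm, fun h0 => hz (S.A_symm_zero j i h0)⟩
  loopless := by
    constructor
    rintro i ⟨hne, -⟩
    exact hne rfl

/-- The support `I₁(β)` of a root `β`. -/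
noncomputable def suppRoot (β : S.X) : Set I := {i | 1 ≤ S.coeffY (S.coroot β) i}

end KMD

/-!
Write `β' = r_i β` and `t = ⟨β∨, α_i⟩`, so that `β'∨ = r_i β∨`, `⟨β'∨, α_i⟩ = -t` and
`s_{β'} = r_i s_β r_i`. Since `r_i` permutes the positive roots other than `α_i`, `γ ↦ r_i γ`
identifies `Inv(s_{β'})` with `Inv(s_β)` away from `α_i` and `s_{β'}(-α_i)`, preserving the
pairing with the coroot, while `α_i ∈ Inv(s_β)` exactly when `t > 0`. Hence a quantum root has
`t ≤ 1`, and applying this to `β` and `β'` gives `|t| ≤ 1`. Conversely, if `|t| ≤ 1`, both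
exceptional roots pair with `β'∨` to `-t`, which is `1` as soon as one of them is an inversion.

Everything rests on two facts about real roots: each is positive or negative, and `β∨` is well
defined (a word sending `α_j` to `α_k` sends `α_j∨` to `α_k∨`). Both follow from Tits' lemma — a
word that `r_i` does not shorten sends `α_i` to a positive root — proved by the usual reduction
to rank-two subgroups, whose Weyl groups are dihedral.
-/

namespace KMD

section Reflections

variable {I : Type} [Fintype I] [DecidableEq I] (S : KMD I)

lemma pair_αv_α_self (i : I) : S.P (S.αv i) (S.α i) = 2 := by
  rw [S.pair_simple, S.A_diag]

/-- The transposed datum; applied to it, statements about `X` become statements about `Y`. -/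
def flip : KMD I where
  A i j := S.A j i
  A_diag i := S.A_diag i
  A_offdiag i j h := S.A_offdiag j i (Ne.symm h)
  A_symm_zero i j h := S.A_symm_zero j i h
  X := S.Y
  Y := S.X
  addX := S.addY
  addY := S.addX
  P := S.P.flip
  α := S.αv
  αv := S.α
  indep_α := S.indep_αv
  indep_αv := S.indep_α
  pair_simple i j := S.pair_simple j i

lemma reflX_apply (i : I) (x : S.X) : S.reflX i x = x - S.P (S.αv i) x • S.α i :=
  S.preReflX_apply i x

lemma reflY_apply (i : I) (y : S.Y) : S.reflY i y = y - S.P y (S.α i) • S.αv i :=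
  S.preReflY_apply i y

@[simp] lemma reflX_reflX (i : I) (x : S.X) : S.reflX i (S.reflX i x) = x :=
  S.preReflX_invol i x

@[simp] lemma reflY_reflY (i : I) (y : S.Y) : S.reflY i (S.reflY i y) = y :=
  S.flip.reflX_reflX i y

lemma reflX_α_self (i : I) : S.reflX i (S.α i) = -S.α i := by
  rw [reflX_apply, pair_αv_α_self]
  module

lemma reflY_αv_self (i : I) : S.reflY i (S.αv i) = -S.αv i :=
  S.flip.reflX_α_self i

lemma pair_reflY (i : I) (y : S.Y) (x : S.X) :
    S.P (S.reflY i y) x = S.P y (S.reflX i x) := by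
  simp only [reflX_apply, reflY_apply, map_sub, map_smul, LinearMap.sub_apply,
    LinearMap.smul_apply, smul_eq_mul]
  ring

lemma wordX_nil : S.wordX [] = 1 := rfl

lemma wordX_cons (i : I) (l : List I) (x : S.X) :
    S.wordX (i :: l) x = S.reflX i (S.wordX l x) := rfl

lemma wordX_append (l₁ l₂ : List I) : S.wordX (l₁ ++ l₂) = S.wordX l₁ * S.wordX l₂ := by
  simp [wordX]

lemma wordX_append_apply (l₁ l₂ : List I) (x : S.X) :
    S.wordX (l₁ ++ l₂) x = S.wordX l₁ (S.wordX l₂ x) := by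
  rw [wordX_append, LinearEquiv.mul_apply]

lemma wordX_inv (l : List I) : (S.wordX l)⁻¹ = S.wordX l.reverse := by
  have : (fun r : S.X ≃ₗ[ℤ] S.X => r⁻¹) ∘ S.reflX = S.reflX := by
    funext i
    rw [Function.comp_apply, inv_eq_iff_mul_eq_one]
    ext x
    exact S.reflX_reflX i x
  rw [wordX, List.prod_inv_reverse, List.map_map, this, ← List.map_reverse, wordX]

@[simp] lemma wordX_reverse_wordX (l : List I) (x : S.X) :
    S.wordX l.reverse (S.wordX l x) = x := by
  rw [← wordX_inv, ← LinearEquiv.mul_apply, inv_mul_cancel]; rfl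

@[simp] lemma wordX_wordX_reverse (l : List I) (x : S.X) :
    S.wordX l (S.wordX l.reverse x) = x := by
  simpa using S.wordX_reverse_wordX l.reverse x

lemma wordY_cons (i : I) (l : List I) (y : S.Y) :
    S.wordY (i :: l) y = S.reflY i (S.wordY l y) := rfl

lemma wordY_append_apply (l₁ l₂ : List I) (y : S.Y) :
    S.wordY (l₁ ++ l₂) y = S.wordY l₁ (S.wordY l₂ y) :=
  S.flip.wordX_append_apply l₁ l₂ y

@[simp] lemma wordY_wordY_reverse (l : List I) (y : S.Y) :
    S.wordY l (S.wordY l.reverse y) = y :=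
  S.flip.wordX_wordX_reverse l y

lemma pair_wordY (l : List I) (y : S.Y) (x : S.X) :
    S.P (S.wordY l y) x = S.P y (S.wordX l.reverse x) := by
  induction l generalizing x with
  | nil => rfl
  | cons i l ih => rw [wordY_cons, pair_reflY, ih, List.reverse_cons, wordX_append_apply]; rfl

lemma pair_wordY_wordX (l : List I) (y : S.Y) (x : S.X) :
    S.P (S.wordY l y) (S.wordX l x) = S.P y x := by
  rw [pair_wordY, wordX_reverse_wordX]

lemma wordX_conj_apply (ω : List I) (j : I) (x : S.X) :
    S.wordX (ω ++ [j] ++ ω.reverse) x =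
      x - S.P (S.wordY ω (S.αv j)) x • S.wordX ω (S.α j) := by
  rw [wordX_append_apply, wordX_append_apply, pair_wordY]
  change S.wordX ω (S.reflX j _) = _
  rw [reflX_apply, map_sub, map_smul, wordX_wordX_reverse]

lemma wordY_conj_apply (ω : List I) (j : I) (y : S.Y) :
    S.wordY (ω ++ [j] ++ ω.reverse) y =
      y - S.P y (S.wordX ω (S.α j)) • S.wordY ω (S.αv j) :=
  S.flip.wordX_conj_apply ω j y

end Reflections

section Cone

variable {I : Type} [Fintype I] [DecidableEq I] (S : KMD I)

def IsNonneg (x : S.X) : Prop := ∃ c : I → ℕ, x = ∑ i, (c i : ℤ) • S.α i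

abbrev rootComb : (I → ℤ) →ₗ[ℤ] S.X := Fintype.linearCombination ℤ S.α

lemma rootComb_injective : Function.Injective S.rootComb :=
  S.indep_α.fintypeLinearCombination_injective

lemma isNonneg_rootComb_iff (c : I → ℤ) : S.IsNonneg (S.rootComb c) ↔ 0 ≤ c := by
  constructor
  · rintro ⟨d, hd⟩
    have : c = fun i => (d i : ℤ) := S.rootComb_injective hd
    exact fun i => this ▸ Int.natCast_nonneg (d i)
  · intro hc
    refine ⟨fun i => (c i).toNat, ?_⟩
    simp only [Int.toNat_of_nonneg (hc _), Fintype.linearCombination_apply]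

variable {S} in
lemma IsNonneg.exists_rootComb {x : S.X} (hx : S.IsNonneg x) :
    ∃ c, 0 ≤ c ∧ x = S.rootComb c := by
  obtain ⟨c, rfl⟩ := hx
  exact ⟨fun i => c i, fun i => Int.natCast_nonneg (c i), rfl⟩

lemma isNonneg_α (i : I) : S.IsNonneg (S.α i) := by
  simpa using (S.isNonneg_rootComb_iff (Pi.single i 1)).mpr (Pi.single_nonneg.mpr zero_le_one)

variable {S} in
lemma IsNonneg.add {x y : S.X} (hx : S.IsNonneg x) (hy : S.IsNonneg y) :
    S.IsNonneg (x + y) := by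
  obtain ⟨c, hc, rfl⟩ := hx.exists_rootComb
  obtain ⟨d, hd, rfl⟩ := hy.exists_rootComb
  rw [← map_add, isNonneg_rootComb_iff]
  exact add_nonneg hc hd

variable {S} in
lemma IsNonneg.smul {x : S.X} (hx : S.IsNonneg x) {m : ℤ} (hm : 0 ≤ m) :
    S.IsNonneg (m • x) := by
  obtain ⟨c, hc, rfl⟩ := hx.exists_rootComb
  rw [← map_smul, isNonneg_rootComb_iff]
  exact smul_nonneg hm hc

lemma eq_zero_of_isNonneg_of_isNonneg_neg {x : S.X} (hx : S.IsNonneg x)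
    (hx' : S.IsNonneg (-x)) : x = 0 := by
  obtain ⟨c, hc, rfl⟩ := hx.exists_rootComb
  rw [← map_neg, isNonneg_rootComb_iff, neg_nonneg] at hx'
  rw [le_antisymm hx' hc, map_zero]

lemma not_isNonneg_neg_α (i : I) : ¬ S.IsNonneg (-S.α i) := fun h =>
  S.indep_α.ne_zero i (S.eq_zero_of_isNonneg_of_isNonneg_neg (S.isNonneg_α i) h)

end Cone

section Lengths

variable {I : Type} [Fintype I] [DecidableEq I] (S : KMD I)

/-- Two words represent the same Weyl group element when their actions on `X` and on `Y` agree. -/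
def weyl (l : List I) : (S.X ≃ₗ[ℤ] S.X) × (S.Y ≃ₗ[ℤ] S.Y) := (S.wordX l, S.wordY l)

@[simp] lemma weyl_nil : S.weyl [] = 1 := rfl

lemma weyl_append (l₁ l₂ : List I) : S.weyl (l₁ ++ l₂) = S.weyl l₁ * S.weyl l₂ :=
  Prod.ext (S.wordX_append l₁ l₂) (S.flip.wordX_append l₁ l₂)

lemma weyl_pair (k : I) : S.weyl [k, k] = 1 :=
  Prod.ext (LinearEquiv.ext (S.reflX_reflX k)) (LinearEquiv.ext (S.reflY_reflY k))

lemma weyl_append_pair (u v : List I) (k : I) : S.weyl (u ++ [k, k] ++ v) = S.weyl (u ++ v) := by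
  rw [weyl_append, weyl_append, weyl_pair, mul_one, weyl_append]

lemma weyl_append_singleton_append_singleton (u : List I) (k : I) :
    S.weyl (u ++ [k] ++ [k]) = S.weyl u := by
  simpa using S.weyl_append_pair u [] k

noncomputable def lengthIn (J : Set I) (ω : List I) : ℕ :=
  sInf {n | ∃ ρ : List I, (∀ k ∈ ρ, k ∈ J) ∧ S.weyl ρ = S.weyl ω ∧ ρ.length = n}

lemma exists_length_eq_lengthIn {J : Set I} {ω : List I} (hω : ∀ k ∈ ω, k ∈ J) :
    ∃ ρ : List I, (∀ k ∈ ρ, k ∈ J) ∧ S.weyl ρ = S.weyl ω ∧ ρ.length = S.lengthIn J ω :=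
  Nat.sInf_mem (s := {n | ∃ ρ : List I, (∀ k ∈ ρ, k ∈ J) ∧ S.weyl ρ = S.weyl ω ∧ ρ.length = n})
    ⟨ω.length, ω, hω, rfl, rfl⟩

variable {S}

lemma lengthIn_le {J : Set I} {ω ρ : List I} (hρ : ∀ k ∈ ρ, k ∈ J)
    (h : S.weyl ρ = S.weyl ω) : S.lengthIn J ω ≤ ρ.length :=
  Nat.sInf_le ⟨ρ, hρ, h, rfl⟩

@[simp] lemma lengthIn_nil (J : Set I) : S.lengthIn J [] = 0 :=
  Nat.le_zero.mp (lengthIn_le (ρ := []) (by simp) rfl)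

lemma lengthIn_congr {J : Set I} {ω ω' : List I} (h : S.weyl ω = S.weyl ω') :
    S.lengthIn J ω = S.lengthIn J ω' := by
  simp only [lengthIn, h]

lemma weyl_eq_one_of_lengthIn_eq_zero {J : Set I} {ω : List I} (hω : ∀ k ∈ ω, k ∈ J)
    (h : S.lengthIn J ω = 0) : S.weyl ω = 1 := by
  obtain ⟨ρ, -, hρ, hlen⟩ := S.exists_length_eq_lengthIn hω
  rw [h, List.length_eq_zero_iff] at hlen
  rw [← hρ, hlen, weyl_nil]

lemma lengthIn_append_singleton_le {J : Set I} {ω σ : List I} {k : I} (hσ : ∀ x ∈ σ, x ∈ J)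
    (h : S.weyl (σ ++ [k]) = S.weyl ω) : S.lengthIn J (ω ++ [k]) ≤ σ.length :=
  lengthIn_le hσ (by rw [weyl_append S ω, ← h, ← weyl_append,
    weyl_append_singleton_append_singleton])

variable (S)

lemma lengthIn_cons_le {J : Set I} {ω : List I} (hω : ∀ k ∈ ω, k ∈ J) {c : I} (hc : c ∈ J) :
    S.lengthIn J (c :: ω) ≤ S.lengthIn J ω + 1 := by
  obtain ⟨ρ, hρJ, hρ, hlen⟩ := S.exists_length_eq_lengthIn hω
  have := lengthIn_le (S := S) (ω := c :: ω) (ρ := c :: ρ)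
    (List.forall_mem_cons.mpr ⟨hc, hρJ⟩)
    (by rw [← List.singleton_append, weyl_append, hρ, ← weyl_append, List.singleton_append])
  simpa [hlen] using this

lemma lengthIn_append_le {J K : Set I} (hJK : J ⊆ K) {a b : List I} (ha : ∀ k ∈ a, k ∈ K)
    (hb : ∀ k ∈ b, k ∈ J) : S.lengthIn K (a ++ b) ≤ S.lengthIn K a + S.lengthIn J b := by
  obtain ⟨ρ, hρK, hρ, hρlen⟩ := S.exists_length_eq_lengthIn ha
  obtain ⟨σ, hσJ, hσ, hσlen⟩ := S.exists_length_eq_lengthIn hb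
  rw [← hρlen, ← hσlen, ← List.length_append]
  refine lengthIn_le (fun k hk => ?_) (by rw [weyl_append, weyl_append, hρ, hσ])
  rcases List.mem_append.mp hk with hk | hk
  exacts [hρK k hk, hJK (hσJ k hk)]

end Lengths

section Dihedral

/-- The alternating word `⋯ i j i j` of length `n` ending with `j`. -/
def altWord {I : Type} (i j : I) : ℕ → List I
  | 0 => []
  | n + 1 => (if n % 2 = 0 then j else i) :: altWord i j n

/-- With `a = A i j` and `b = A j i`, the coordinates of `wordX (altWord i j n) (α i)` in the
basis `α i, α j`. -/
def dihedralCoeffs (a b : ℤ) : ℕ → ℤ × ℤ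
  | 0 => (1, 0)
  | n + 1 =>
    let c := dihedralCoeffs a b n
    if n % 2 = 0 then (c.1, -b * c.1 - c.2) else (-a * c.2 - c.1, c.2)

/-- `4 ≤ a * b` is the infinite dihedral case; the last two conjuncts are the invariant that keeps
the coordinates nonnegative. -/
lemma dihedralCoeffs_nonneg_of_four_le {a b : ℤ} (ha : a ≤ 0) (hb : b ≤ 0) (hab : 4 ≤ a * b)
    (n : ℕ) :
    0 ≤ (dihedralCoeffs a b n).1 ∧ 0 ≤ (dihedralCoeffs a b n).2 ∧
    (n % 2 = 0 → 2 * (dihedralCoeffs a b n).2 ≤ -b * (dihedralCoeffs a b n).1) ∧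
    (n % 2 = 1 → 2 * (dihedralCoeffs a b n).1 ≤ -a * (dihedralCoeffs a b n).2) := by
  induction n with
  | zero => simp only [dihedralCoeffs]; omega
  | succ n ih =>
    obtain ⟨hp, hq, hev, hod⟩ := ih
    rcases Nat.mod_two_eq_zero_or_one n with h | h
    · simp only [dihedralCoeffs, h, if_true]
      have := hev h
      refine ⟨hp, by nlinarith, by omega, fun _ => by nlinarith⟩
    · simp only [dihedralCoeffs, h, one_ne_zero, if_false]
      have := hod h
      refine ⟨by nlinarith, hq, fun _ => by nlinarith, by omega⟩

section Alternating

variable {I : Type} (i j : I)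

@[simp] lemma length_altWord (n : ℕ) : (altWord i j n).length = n := by
  induction n with
  | zero => rfl
  | succ n ih => simp [altWord, ih]

lemma mem_altWord {n : ℕ} {k : I} (hk : k ∈ altWord i j n) : k ∈ ({i, j} : Set I) := by
  induction n with
  | zero => simp [altWord] at hk
  | succ n ih =>
    rw [altWord, List.mem_cons] at hk
    rcases hk with rfl | hk
    · split_ifs <;> simp
    · exact ih hk

lemma altWord_succ (n : ℕ) : altWord i j (n + 1) = altWord j i n ++ [j] := by
  induction n with
  | zero => rfl
  | succ n ih =>
    rw [altWord, ih, altWord]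
    rcases Nat.mod_two_eq_zero_or_one n with h | h <;> simp [h, Nat.succ_mod_two_eq_zero_iff]

lemma exists_altWord_add (k m : ℕ) : ∃ p : List I, altWord i j (k + m) = p ++ altWord i j m := by
  induction k with
  | zero => exact ⟨[], by simp⟩
  | succ k ih =>
    obtain ⟨p, hp⟩ := ih
    exact ⟨_ :: p, by rw [Nat.add_right_comm, altWord, hp, List.cons_append]⟩

variable {i j}

lemma eq_altWord_of_isChain {ρ : List I} (hρ : ∀ k ∈ ρ, k ∈ ({i, j} : Set I))
    (hchain : ρ.IsChain (· ≠ ·)) : ρ = altWord i j ρ.length ∨ ρ = altWord j i ρ.length := by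
  induction ρ with
  | nil => exact Or.inl rfl
  | cons a t ih =>
    have ha := hρ a List.mem_cons_self
    have ht := ih (fun k hk => hρ k (List.mem_cons_of_mem a hk)) hchain.tail
    simp only [Set.mem_insert_iff, Set.mem_singleton_iff] at ha
    cases t with
    | nil => rcases ha with rfl | rfl <;> simp [altWord]
    | cons b t =>
      have hab : a ≠ b := (List.isChain_cons_cons.mp hchain).1
      have step : ∀ {i j : I}, (a = i ∨ a = j) → b :: t = altWord i j (t.length + 1) →
          a :: b :: t = altWord i j (t.length + 2) := by
        intro i j ha ht
        have hb : b = if t.length % 2 = 0 then j else i := (List.cons_eq_cons.mp ht).1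
        rw [ht, show t.length + 2 = t.length + 1 + 1 from rfl, altWord]
        congr 1
        rcases Nat.mod_two_eq_zero_or_one t.length with h | h
        · rw [if_pos h] at hb
          rw [if_neg (by omega)]
          exact ha.resolve_right (hb ▸ hab)
        · rw [if_neg (by omega)] at hb
          rw [if_pos (by omega)]
          exact ha.resolve_left (hb ▸ hab)
      simp only [List.length_cons] at ht ⊢
      rcases ht with ht | ht
      exacts [Or.inl (step ha ht), Or.inr (step ha.symm ht)]

end Alternating

variable {I : Type} [Fintype I] [DecidableEq I] (S : KMD I)

/-- The order of `r_i r_j` when it is finite, read off from `A i j * A j i ∈ {0, 1, 2, 3}`. -/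
def coxeterOrder (i j : I) : ℕ :=
  if S.A i j * S.A j i = 0 then 2 else if S.A i j * S.A j i = 1 then 3
  else if S.A i j * S.A j i = 2 then 4 else 6

lemma one_le_coxeterOrder (i j : I) : 1 ≤ S.coxeterOrder i j := by
  unfold coxeterOrder; split_ifs <;> omega

variable {S}

lemma cartan_cases {i j : I} (hij : i ≠ j) (hfin : S.A i j * S.A j i ≤ 3) :
    (S.A i j = 0 ∧ S.A j i = 0) ∨ (S.A i j = -1 ∧ S.A j i = -1) ∨
    (S.A i j = -1 ∧ S.A j i = -2) ∨ (S.A i j = -2 ∧ S.A j i = -1) ∨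
    (S.A i j = -1 ∧ S.A j i = -3) ∨ (S.A i j = -3 ∧ S.A j i = -1) := by
  have ha := S.A_offdiag i j hij
  have hb := S.A_offdiag j i hij.symm
  have hab := S.A_symm_zero i j
  have hba := S.A_symm_zero j i
  rcases ha.eq_or_lt with ha0 | ha1
  · exact Or.inl ⟨ha0, hab ha0⟩
  rcases hb.eq_or_lt with hb0 | hb1
  · exact absurd (hba hb0) ha1.ne
  have : -3 ≤ S.A i j := by nlinarith
  have : -3 ≤ S.A j i := by nlinarith
  interval_cases h : S.A i j <;> interval_cases h' : S.A j i <;> omega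

lemma wordX_altWord_coxeterOrder {i j : I} (hij : i ≠ j) (hfin : S.A i j * S.A j i ≤ 3) :
    S.wordX (altWord i j (S.coxeterOrder i j)) = S.wordX (altWord j i (S.coxeterOrder i j)) := by
  ext x
  rcases cartan_cases hij hfin with ⟨h1, h2⟩ | ⟨h1, h2⟩ | ⟨h1, h2⟩ | ⟨h1, h2⟩ | ⟨h1, h2⟩ |
    ⟨h1, h2⟩ <;>
  simp only [coxeterOrder, h1, h2] <;>
  norm_num [altWord, wordX_cons, reflX_apply, pair_simple, A_diag, h1, h2] <;> module

lemma weyl_altWord_coxeterOrder {i j : I} (hij : i ≠ j) (hfin : S.A i j * S.A j i ≤ 3) :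
    S.weyl (altWord i j (S.coxeterOrder i j)) = S.weyl (altWord j i (S.coxeterOrder i j)) := by
  refine Prod.ext (wordX_altWord_coxeterOrder hij hfin) ?_
  have hm : S.flip.coxeterOrder i j = S.coxeterOrder i j := by
    simp only [coxeterOrder, flip, mul_comm]
  have := wordX_altWord_coxeterOrder (S := S.flip) hij (by simpa only [flip, mul_comm] using hfin)
  rwa [hm] at this

lemma dihedralCoeffs_nonneg {i j : I} (hij : i ≠ j) {n : ℕ}
    (hn : S.A i j * S.A j i ≤ 3 → n < S.coxeterOrder i j) :
    0 ≤ (dihedralCoeffs (S.A i j) (S.A j i) n).1 ∧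
      0 ≤ (dihedralCoeffs (S.A i j) (S.A j i) n).2 := by
  by_cases hfin : S.A i j * S.A j i ≤ 3
  · have hn := hn hfin
    rcases cartan_cases hij hfin with ⟨h1, h2⟩ | ⟨h1, h2⟩ | ⟨h1, h2⟩ | ⟨h1, h2⟩ | ⟨h1, h2⟩ |
      ⟨h1, h2⟩ <;> simp only [coxeterOrder, h1, h2] at hn ⊢ <;> norm_num at hn <;>
      interval_cases n <;> decide
  · exact (dihedralCoeffs_nonneg_of_four_le (S.A_offdiag i j hij) (S.A_offdiag j i hij.symm)
      (by omega) n).imp_right And.left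

variable (S)

lemma wordX_altWord_α (i j : I) (n : ℕ) :
    S.wordX (altWord i j n) (S.α i) = (dihedralCoeffs (S.A i j) (S.A j i) n).1 • S.α i +
      (dihedralCoeffs (S.A i j) (S.A j i) n).2 • S.α j := by
  induction n with
  | zero => simp [altWord, dihedralCoeffs, wordX_nil]
  | succ n ih =>
    rw [altWord, wordX_cons, ih]
    rcases Nat.mod_two_eq_zero_or_one n with h | h <;>
      simp only [dihedralCoeffs, h, reflX_apply, map_add, map_smul, pair_simple, A_diag,
        if_true, one_ne_zero, if_false] <;> module

variable {S}

/-- A shortest `{i, j}`-word for `w` after which `r_i` does not shorten it alternates and ends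
with `j`; a braid relation would otherwise produce one of the same length ending with `i`. -/
lemma weyl_altWord_lengthIn {i j : I} (hij : i ≠ j) {w : List I}
    (hw : ∀ k ∈ w, k ∈ ({i, j} : Set I))
    (h : S.lengthIn {i, j} w ≤ S.lengthIn {i, j} (w ++ [i])) :
    S.weyl (altWord i j (S.lengthIn {i, j} w)) = S.weyl w ∧
      (S.A i j * S.A j i ≤ 3 → S.lengthIn {i, j} w < S.coxeterOrder i j) := by
  set n := S.lengthIn {i, j} w
  have not_ends_i : ∀ σ : List I, (∀ k ∈ σ, k ∈ ({i, j} : Set I)) →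
      S.weyl (σ ++ [i]) = S.weyl w → n ≤ σ.length := fun σ hσ hσw =>
    h.trans (lengthIn_append_singleton_le hσ hσw)
  obtain ⟨ρ, hρJ, hρ, hlen⟩ := S.exists_length_eq_lengthIn hw
  have hchain : ρ.IsChain (· ≠ ·) := by
    rw [List.isChain_iff_forall_rel_of_append_cons_cons]
    rintro a b l₁ l₂ rfl rfl
    have := lengthIn_le (J := {i, j}) (ρ := l₁ ++ l₂)
      (fun k hk => hρJ k (by simp only [List.mem_append, List.mem_cons] at hk ⊢; tauto))
      (by rw [← hρ, ← S.weyl_append_pair l₁ l₂ a]; simp)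
    simp only [List.length_append, List.length_cons] at this hlen
    omega
  have hρalt : ρ = altWord i j n := by
    rcases eq_altWord_of_isChain hρJ hchain with hρi | hρj
    · rwa [hlen] at hρi
    rcases hn : ρ.length with _ | m
    · have hn0 : n = 0 := by omega
      rw [hn0, List.length_eq_zero_iff.mp hn]
      rfl
    · rw [hn, altWord_succ] at hρj
      have := not_ends_i (altWord i j m) (fun k hk => mem_altWord i j hk) (hρj ▸ hρ)
      simp only [length_altWord] at this
      omega
  refine ⟨hρalt ▸ hρ, fun hfin => ?_⟩
  by_contra! hm
  set m := S.coxeterOrder i j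
  obtain ⟨p, hp⟩ := exists_altWord_add i j (n - m) m
  rw [Nat.sub_add_cancel hm] at hp
  have hpJ : ∀ k ∈ p, k ∈ ({i, j} : Set I) := fun k hk =>
    mem_altWord i j (hp ▸ List.mem_append_left _ hk)
  have := not_ends_i (p ++ altWord i j (m - 1))
    (fun k hk => (List.mem_append.mp hk).elim (hpJ k) (mem_altWord i j))
    (by rw [List.append_assoc, ← altWord_succ, Nat.sub_add_cancel (S.one_le_coxeterOrder i j),
      weyl_append, ← weyl_altWord_coxeterOrder hij hfin, ← weyl_append, ← hp, ← hρalt, hρ])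
  have hplen := congrArg List.length hp
  simp only [List.length_append, length_altWord] at this hplen
  have := S.one_le_coxeterOrder i j
  omega

lemma exists_wordX_α_eq_of_lengthIn_le {i j : I} (hij : i ≠ j) {w : List I}
    (hw : ∀ k ∈ w, k ∈ ({i, j} : Set I))
    (h : S.lengthIn {i, j} w ≤ S.lengthIn {i, j} (w ++ [i])) :
    ∃ p q : ℕ, S.wordX w (S.α i) = (p : ℤ) • S.α i + (q : ℤ) • S.α j := by
  obtain ⟨hweyl, hfin⟩ := weyl_altWord_lengthIn hij hw h
  obtain ⟨hp, hq⟩ := dihedralCoeffs_nonneg hij hfin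
  refine ⟨(dihedralCoeffs (S.A i j) (S.A j i) (S.lengthIn {i, j} w)).1.toNat,
    (dihedralCoeffs (S.A i j) (S.A j i) (S.lengthIn {i, j} w)).2.toNat, ?_⟩
  rw [show S.wordX w = S.wordX (altWord i j _) from (congrArg Prod.fst hweyl).symm, wordX_altWord_α,
    Int.toNat_of_nonneg hp, Int.toNat_of_nonneg hq]

end Dihedral

section Positivity

variable {I : Type} [Fintype I] [DecidableEq I] (S : KMD I)

lemma exists_lengthIn_append_lt {ω : List I} (hω : 0 < S.lengthIn Set.univ ω) :
    ∃ j, S.lengthIn Set.univ (ω ++ [j]) < S.lengthIn Set.univ ω := by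
  obtain ⟨ρ, -, hρ, hlen⟩ := S.exists_length_eq_lengthIn (J := Set.univ) (ω := ω) (by simp)
  obtain ⟨ρ₀, j, rfl⟩ := (List.eq_nil_or_concat' ρ).resolve_left (by rintro rfl; simp_all)
  refine ⟨j, (lengthIn_append_singleton_le (fun _ _ => trivial) hρ).trans_lt ?_⟩
  simp only [List.length_append, List.length_singleton] at hlen
  omega

/-- Take `u` of least length among all such factorizations. -/
lemma exists_parabolic_factorization (i j : I) (ω : List I) :
    ∃ u w : List I, (∀ k ∈ w, k ∈ ({i, j} : Set I)) ∧ S.weyl (u ++ w) = S.weyl ω ∧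
      S.lengthIn Set.univ u + S.lengthIn {i, j} w ≤ S.lengthIn Set.univ ω ∧
      ∀ c ∈ ({i, j} : Set I), S.lengthIn Set.univ u ≤ S.lengthIn Set.univ (u ++ [c]) := by
  classical
  let P : ℕ → Prop := fun n => ∃ u w : List I, (∀ k ∈ w, k ∈ ({i, j} : Set I)) ∧
    S.weyl (u ++ w) = S.weyl ω ∧
    S.lengthIn Set.univ u + S.lengthIn {i, j} w ≤ S.lengthIn Set.univ ω ∧
    S.lengthIn Set.univ u = n
  have hP : ∃ n, P n := ⟨_, ω, [], by simp, by simp, by simp, rfl⟩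
  obtain ⟨u, w, hw, hweyl, hle, hu⟩ := Nat.find_spec hP
  refine ⟨u, w, hw, hweyl, hle, fun c hc => ?_⟩
  by_contra! hlt
  refine Nat.find_min hP (hu ▸ hlt)
    ⟨u ++ [c], c :: w, List.forall_mem_cons.mpr ⟨hc, hw⟩, ?_, ?_, rfl⟩
  · rw [← hweyl, ← S.weyl_append_pair u w c]
    simp
  · have := S.lengthIn_cons_le hw hc
    omega

/-- Tits' lemma. Write `ω = u w` with `w` in the dihedral group of `r_i` and an `r_j` that
shortens `ω`; induction on the length handles `u`, the dihedral computation handles `w`. -/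
theorem isNonneg_wordX_α_of_lengthIn_le (ω : List I) (i : I)
    (h : S.lengthIn Set.univ ω ≤ S.lengthIn Set.univ (ω ++ [i])) :
    S.IsNonneg (S.wordX ω (S.α i)) := by
  induction hn : S.lengthIn Set.univ ω using Nat.strong_induction_on generalizing ω i with
  | _ n ih =>
  rcases Nat.eq_zero_or_pos n with rfl | hpos
  · have := weyl_eq_one_of_lengthIn_eq_zero (fun _ _ => trivial) hn
    rw [show S.wordX ω = 1 from congrArg Prod.fst this]
    exact S.isNonneg_α i
  obtain ⟨j, hj⟩ := S.exists_lengthIn_append_lt (hn ▸ hpos)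
  have hij : i ≠ j := by rintro rfl; omega
  obtain ⟨u, w, hw, hweyl, hle, hu⟩ := S.exists_parabolic_factorization i j ω
  have hw_pos : 0 < S.lengthIn {i, j} w := by
    refine Nat.pos_of_ne_zero fun h0 => ?_
    have huω : S.weyl u = S.weyl ω := by
      rw [← hweyl, weyl_append, weyl_eq_one_of_lengthIn_eq_zero hw h0, mul_one]
    have := hu j (by simp)
    rw [lengthIn_congr huω, lengthIn_congr (ω := u ++ [j]) (ω' := ω ++ [j])
      (by rw [weyl_append, huω, ← weyl_append])] at this
    omega
  have hw_i : S.lengthIn {i, j} w ≤ S.lengthIn {i, j} (w ++ [i]) := by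
    by_contra! hlt
    have := S.lengthIn_append_le (Set.subset_univ _) (a := u) (b := w ++ [i])
      (fun _ _ => trivial) (List.forall_mem_append.mpr ⟨hw, by simp⟩)
    rw [← List.append_assoc, lengthIn_congr (ω := u ++ w ++ [i]) (ω' := ω ++ [i])
      (by rw [weyl_append, hweyl, ← weyl_append])] at this
    omega
  obtain ⟨p, q, hpq⟩ := S.exists_wordX_α_eq_of_lengthIn_le hij hw hw_i
  have hui := ih _ (by omega) u i (hu i (by simp)) rfl
  have huj := ih _ (by omega) u j (hu j (by simp)) rfl
  rw [show S.wordX ω = S.wordX (u ++ w) from congrArg Prod.fst hweyl.symm, wordX_append_apply,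
    hpq, map_add, map_smul, map_smul]
  exact (hui.smul (Int.natCast_nonneg p)).add (huj.smul (Int.natCast_nonneg q))

lemma exists_isNonneg_neg_wordX_α {ω : List I} (hω : 0 < S.lengthIn Set.univ ω) :
    ∃ k, S.IsNonneg (-S.wordX ω (S.α k)) := by
  obtain ⟨ρ, -, hρ, hlen⟩ := S.exists_length_eq_lengthIn (J := Set.univ) (ω := ω) (by simp)
  obtain ⟨ρ₀, k, rfl⟩ := (List.eq_nil_or_concat' ρ).resolve_left (by rintro rfl; simp_all)
  have hρ₀ : S.lengthIn Set.univ ρ₀ ≤ S.lengthIn Set.univ (ρ₀ ++ [k]) := by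
    have := lengthIn_le (S := S) (J := Set.univ) (ρ := ρ₀) (fun _ _ => trivial) rfl
    rw [lengthIn_congr hρ]
    simp only [List.length_append, List.length_singleton] at hlen
    omega
  refine ⟨k, ?_⟩
  rw [show S.wordX ω = S.wordX (ρ₀ ++ [k]) from congrArg Prod.fst hρ.symm, wordX_append_apply]
  change S.IsNonneg (-S.wordX ρ₀ (S.reflX k (S.α k)))
  rw [reflX_α_self, map_neg, neg_neg]
  exact S.isNonneg_wordX_α_of_lengthIn_le ρ₀ k hρ₀

lemma isNonneg_or_isNonneg_neg_wordX_α (ω : List I) (k : I) :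
    S.IsNonneg (S.wordX ω (S.α k)) ∨ S.IsNonneg (-S.wordX ω (S.α k)) := by
  rcases le_or_gt (S.lengthIn Set.univ ω) (S.lengthIn Set.univ (ω ++ [k])) with h | h
  · exact Or.inl (S.isNonneg_wordX_α_of_lengthIn_le ω k h)
  · right
    have hk : S.lengthIn Set.univ (ω ++ [k]) ≤ S.lengthIn Set.univ (ω ++ [k] ++ [k]) := by
      rw [lengthIn_congr (S.weyl_append_singleton_append_singleton ω k)]
      exact h.le
    have := S.isNonneg_wordX_α_of_lengthIn_le (ω ++ [k]) k hk
    rwa [wordX_append_apply, show S.wordX [k] (S.α k) = -S.α k from S.reflX_α_self k,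
      map_neg] at this

/-- Such a word has length `0`, since otherwise it sends some simple root to a negative root. -/
lemma wordY_eq_one_of_wordX_α_eq (ω : List I) (h : ∀ k, S.wordX ω (S.α k) = S.α k) :
    S.wordY ω = 1 := by
  rcases Nat.eq_zero_or_pos (S.lengthIn Set.univ ω) with h0 | hpos
  · exact congrArg Prod.snd (weyl_eq_one_of_lengthIn_eq_zero (fun _ _ => trivial) h0)
  · obtain ⟨k, hk⟩ := S.exists_isNonneg_neg_wordX_α hpos
    exact absurd (h k ▸ hk) (S.not_isNonneg_neg_α k)

end Positivity

section CorootUniqueness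

variable {I : Type} [Fintype I] [DecidableEq I] (S : KMD I)

lemma wordX_mem_span (l : List I) {x : S.X} (hx : x ∈ Submodule.span ℤ (Set.range S.α)) :
    S.wordX l x ∈ Submodule.span ℤ (Set.range S.α) := by
  induction l with
  | nil => exact hx
  | cons i l ih =>
    rw [wordX_cons, reflX_apply]
    exact sub_mem ih (Submodule.smul_mem _ _ (Submodule.subset_span ⟨i, rfl⟩))


lemma nonneg_of_isNonneg_α_add_smul_α {t k : I} (htk : t ≠ k) {m : ℤ}
    (h : S.IsNonneg (S.α t + m • S.α k) ∨ S.IsNonneg (-(S.α t + m • S.α k))) : 0 ≤ m := by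
  have hcomb : S.α t + m • S.α k = S.rootComb (Pi.single t 1 + m • Pi.single k 1) := by
    rw [map_add, map_smul, Fintype.linearCombination_apply_single,
      Fintype.linearCombination_apply_single, one_smul, one_smul]
  rw [hcomb, ← map_neg, isNonneg_rootComb_iff, isNonneg_rootComb_iff] at h
  rcases h with h | h
  · simpa [htk.symm] using h k
  · simpa [htk] using h t

/-- `W` and its inverse move `α t` to `α t ∓ ⟨e, α t⟩ α k`; both are roots, hence of constant
sign. -/
lemma pair_α_eq_zero_of_wordX_eq_transvection {W : List I} {e : S.Y} {k : I}
    (hW : ∀ x, S.wordX W x = x - S.P e x • S.α k) (hek : S.P e (S.α k) = 0) (t : I) :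
    S.P e (S.α t) = 0 := by
  rcases eq_or_ne t k with rfl | htk
  · exact hek
  have hinv : S.wordX W.reverse (S.α t) = S.α t + S.P e (S.α t) • S.α k := by
    apply (S.wordX W).injective
    rw [wordX_wordX_reverse, hW, map_add, map_smul, hek, smul_eq_mul, mul_zero, add_zero]
    abel
  have h₁ := S.isNonneg_or_isNonneg_neg_wordX_α W.reverse t
  have h₂ := S.isNonneg_or_isNonneg_neg_wordX_α W t
  rw [hinv] at h₁
  rw [hW, sub_eq_add_neg, ← neg_smul] at h₂
  have := S.nonneg_of_isNonneg_α_add_smul_α htk h₁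
  have := S.nonneg_of_isNonneg_α_add_smul_α htk h₂
  omega

/-- The word `ω j ω⁻¹ k` acts on `X` as the transvection `x ↦ x - ⟨d • ω αv j - αv k, x⟩ α k`,
which fixes the simple roots by the previous lemma, hence is trivial on `Y` as well; its value
`-αv k + 2 d • ω αv j` on `αv k` then pins down `d` and `ω αv j` in the coroot lattice. -/
theorem eq_one_and_wordY_αv_eq_of_wordX_α_eq_smul {ω : List I} {j k : I} {d : ℤ} (hd : 0 < d)
    (h : S.wordX ω (S.α j) = d • S.α k) : d = 1 ∧ S.wordY ω (S.αv j) = S.αv k := by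
  set c := S.wordY ω (S.αv j)
  have hτ : d * S.P c (S.α k) = 2 := by
    have := S.pair_wordY_wordX ω (S.αv j) (S.α j)
    rwa [h, map_smul, smul_eq_mul, pair_αv_α_self] at this
  set e := d • c - S.αv k
  have he : ∀ x, S.P e x = d * S.P c x - S.P (S.αv k) x := fun x => by
    simp only [e, map_sub, map_smul, LinearMap.sub_apply, LinearMap.smul_apply, smul_eq_mul]
  have hek : S.P e (S.α k) = 0 := by rw [he, hτ, pair_αv_α_self, sub_self]
  have hW : ∀ x, S.wordX (ω ++ [j] ++ ω.reverse ++ [k]) x = x - S.P e x • S.α k := by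
    intro x
    rw [wordX_append_apply, wordX_conj_apply, h]
    change S.reflX k x - S.P c (S.reflX k x) • d • S.α k = _
    rw [reflX_apply, map_sub, map_smul, smul_eq_mul, he]
    linear_combination (norm := module) hτ • (S.P (S.αv k) x • S.α k)
  have hY := S.wordY_eq_one_of_wordX_α_eq _ fun t => by
    rw [hW, S.pair_α_eq_zero_of_wordX_eq_transvection hW hek t, zero_smul, sub_zero]
  have h2e : (2 : ℤ) • e = 0 := by
    have : S.wordY (ω ++ [j] ++ ω.reverse ++ [k]) (S.αv k) = S.αv k := by rw [hY]; rfl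
    rw [wordY_append_apply, wordY_conj_apply, h,
      show S.wordY [k] (S.αv k) = -S.αv k from S.reflY_αv_self k, map_neg,
      LinearMap.neg_apply, map_smul, pair_αv_α_self] at this
    linear_combination (norm := module) this
  obtain ⟨y, hy⟩ := (Submodule.mem_span_range_iff_exists_fun ℤ).mp
    (S.flip.wordX_mem_span ω (Submodule.subset_span ⟨j, rfl⟩))
  change ∑ i, y i • S.αv i = c at hy
  have hy' : d • y = Pi.single k 1 := by
    have : S.flip.rootComb ((2 : ℤ) • (d • y - Pi.single k 1)) = S.flip.rootComb 0 := by
      rw [map_zero, map_smul, map_sub, map_smul, Fintype.linearCombination_apply_single, one_smul]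
      change (2 : ℤ) • (d • ∑ i, y i • S.αv i - S.αv k) = 0
      rw [hy]
      exact h2e
    have := (smul_eq_zero.mp (S.flip.rootComb_injective this)).resolve_left two_ne_zero
    exact sub_eq_zero.mp this
  have hd1 : d = 1 := Int.eq_one_of_mul_eq_one_right hd.le (by simpa using congrFun hy' k)
  refine ⟨hd1, ?_⟩
  rw [hd1, one_smul] at hy'
  rw [← hy, hy']
  exact Fintype.linearCombination_apply_single ℤ S.αv k 1 |>.trans (one_smul ℤ _)

end CorootUniqueness

section Roots

variable {I : Type} [Fintype I] [DecidableEq I] (S : KMD I)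

lemma isRoot_wordX_α (l : List I) (j : I) : S.IsRoot (S.wordX l (S.α j)) := ⟨(l, j), rfl⟩

lemma isRoot_α (j : I) : S.IsRoot (S.α j) := S.isRoot_wordX_α [] j

variable {S}

lemma IsRoot.reflX {β : S.X} (hβ : S.IsRoot β) (i : I) : S.IsRoot (S.reflX i β) := by
  obtain ⟨⟨l, j⟩, rfl⟩ := hβ
  exact S.isRoot_wordX_α (i :: l) j

lemma IsRoot.neg {β : S.X} (hβ : S.IsRoot β) : S.IsRoot (-β) := by
  obtain ⟨⟨l, j⟩, rfl⟩ := hβ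
  refine ⟨(l ++ [j], j), ?_⟩
  rw [wordX_append_apply, show S.wordX [j] (S.α j) = -S.α j from S.reflX_α_self j, map_neg]

lemma IsRoot.ne_zero {β : S.X} (hβ : S.IsRoot β) : β ≠ 0 := by
  obtain ⟨⟨l, j⟩, rfl⟩ := hβ
  exact (LinearEquiv.map_ne_zero_iff _).mpr (S.indep_α.ne_zero j)

lemma IsRoot.isNonneg_or_isNonneg_neg {β : S.X} (hβ : S.IsRoot β) :
    S.IsNonneg β ∨ S.IsNonneg (-β) := by
  obtain ⟨⟨l, j⟩, rfl⟩ := hβ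
  exact S.isNonneg_or_isNonneg_neg_wordX_α l j

lemma isNegRoot_iff {β : S.X} : S.IsNegRoot β ↔ S.IsRoot β ∧ S.IsNonneg (-β) := by
  refine and_congr_right fun _ => exists_congr fun c => ?_
  rw [neg_eq_iff_eq_neg]

lemma IsRoot.isNegRoot_of_not_isNonneg {β : S.X} (hβ : S.IsRoot β) (h : ¬ S.IsNonneg β) :
    S.IsNegRoot β :=
  isNegRoot_iff.mpr ⟨hβ, hβ.isNonneg_or_isNonneg_neg.resolve_left h⟩

lemma IsPosRoot.isNonneg {β : S.X} (hβ : S.IsPosRoot β) : S.IsNonneg β := hβ.2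

lemma IsPosRoot.not_isNonneg_neg {β : S.X} (hβ : S.IsPosRoot β) : ¬ S.IsNonneg (-β) :=
  fun h => hβ.1.ne_zero (S.eq_zero_of_isNonneg_of_isNonneg_neg hβ.isNonneg h)

lemma IsPosRoot.neg_isNegRoot {β : S.X} (hβ : S.IsPosRoot β) : S.IsNegRoot (-β) :=
  isNegRoot_iff.mpr ⟨hβ.1.neg, (neg_neg β).symm ▸ hβ.isNonneg⟩

lemma IsNegRoot.neg_isPosRoot {β : S.X} (hβ : S.IsNegRoot β) : S.IsPosRoot (-β) :=
  ⟨(isNegRoot_iff.mp hβ).1.neg, (isNegRoot_iff.mp hβ).2⟩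

lemma not_isPosRoot_neg_α (i : I) : ¬ S.IsPosRoot (-S.α i) :=
  fun h => S.not_isNonneg_neg_α i h.2

lemma eq_α_of_isRoot_of_eq_smul {β : S.X} (hβ : S.IsRoot β) {i : I} {d : ℤ} (hd : 0 < d)
    (h : β = d • S.α i) : β = S.α i := by
  obtain ⟨⟨l, j⟩, rfl⟩ := hβ
  rw [h, (S.eq_one_and_wordY_αv_eq_of_wordX_α_eq_smul hd h).1, one_smul]

/-- A positive root other than `α i` has a positive coordinate off `i`, which survives in
`a • α i - m • β` with the sign of `-m`. -/
lemma IsPosRoot.not_isNonneg_smul_α_sub_smul {β : S.X} (hβ : S.IsPosRoot β) {i : I}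
    (hβi : β ≠ S.α i) (a : ℤ) {m : ℤ} (hm : 0 < m) : ¬ S.IsNonneg (a • S.α i - m • β) := by
  obtain ⟨c, hc, hβc⟩ := hβ.isNonneg.exists_rootComb
  obtain ⟨t, hti, hct⟩ : ∃ t, t ≠ i ∧ 0 < c t := by
    by_contra! hzero
    have hc' : c = Pi.single i (c i) := funext fun t => by
      rcases eq_or_ne t i with rfl | hti
      · simp
      · simpa [hti] using le_antisymm (hzero t hti) (hc t)
    have hβi' : β = c i • S.α i := by
      rw [hβc, ← Fintype.linearCombination_apply_single ℤ S.α i (c i), ← hc']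
    have hci : 0 < c i :=
      lt_of_le_of_ne (hc i) fun h0 => hβ.1.ne_zero (by rw [hβi', ← h0]; simp)
    exact hβi (eq_α_of_isRoot_of_eq_smul hβ.1 hci hβi')
  rw [hβc, ← Fintype.linearCombination_apply_single ℤ S.α i a, ← map_smul, ← map_sub,
    isNonneg_rootComb_iff]
  intro h
  have := h t
  simp only [Pi.sub_apply, Pi.smul_apply, Pi.single_eq_of_ne hti, smul_eq_mul,
    Pi.zero_apply] at this
  nlinarith

lemma IsPosRoot.reflX {β : S.X} (hβ : S.IsPosRoot β) {i : I} (hβi : β ≠ S.α i) :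
    S.IsPosRoot (S.reflX i β) := by
  refine ⟨hβ.1.reflX i, ?_⟩
  by_contra h
  have := (isNegRoot_iff.mp ((hβ.1.reflX i).isNegRoot_of_not_isNonneg h)).2
  rw [reflX_apply, neg_sub, ← one_smul ℤ β] at this
  exact hβ.not_isNonneg_smul_α_sub_smul hβi _ one_pos this

lemma IsPosRoot.reflX_ne_α {β : S.X} (hβ : S.IsPosRoot β) (i : I) : S.reflX i β ≠ S.α i := by
  intro h
  apply not_isPosRoot_neg_α (S := S) i
  rw [← S.reflX_α_self, ← h, reflX_reflX]
  exact hβ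

lemma IsNegRoot.reflX {β : S.X} (hβ : S.IsNegRoot β) {i : I} (hβi : β ≠ -S.α i) :
    S.IsNegRoot (S.reflX i β) := by
  have := hβ.neg_isPosRoot.reflX (i := i) (by rintro h; exact hβi (neg_eq_iff_eq_neg.mp h))
  rw [map_neg] at this
  simpa using this.neg_isNegRoot

lemma coroot_eq {β : S.X} {l : List I} {j : I} (h : β = S.wordX l (S.α j)) :
    S.coroot β = S.wordY l (S.αv j) := by
  have hβ : S.IsRoot β := ⟨(l, j), h⟩
  rw [coroot, dif_pos hβ]
  have hl : S.wordX (l.reverse ++ hβ.choose.1) (S.α hβ.choose.2) = (1 : ℤ) • S.α j := by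
    rw [wordX_append_apply, ← hβ.choose_spec, h, wordX_reverse_wordX, one_smul]
  have := congrArg (S.wordY l) (S.eq_one_and_wordY_αv_eq_of_wordX_α_eq_smul one_pos hl).2
  rwa [wordY_append_apply, wordY_wordY_reverse] at this

lemma coroot_α (i : I) : S.coroot (S.α i) = S.αv i := coroot_eq (l := []) rfl

lemma IsRoot.coroot_reflX {β : S.X} (hβ : S.IsRoot β) (i : I) :
    S.coroot (S.reflX i β) = S.reflY i (S.coroot β) := by
  obtain ⟨⟨l, j⟩, h⟩ := hβ
  rw [coroot_eq (l := i :: l) (j := j) (by rw [h]; rfl), coroot_eq h, wordY_cons]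

lemma IsRoot.pair_coroot_self {β : S.X} (hβ : S.IsRoot β) : S.P (S.coroot β) β = 2 := by
  obtain ⟨⟨l, j⟩, rfl⟩ := hβ
  rw [coroot_eq rfl, pair_wordY_wordX, pair_αv_α_self]

lemma IsRoot.sReflX_eq {β : S.X} (hβ : S.IsRoot β) :
    S.sReflX β = S.wordX (hβ.choose.1 ++ [hβ.choose.2] ++ hβ.choose.1.reverse) := by
  rw [sReflX, dif_pos hβ, wordX_append, wordX_append, wordX_inv]
  congr 2

lemma IsRoot.sReflX_apply {β : S.X} (hβ : S.IsRoot β) (x : S.X) :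
    S.sReflX β x = x - S.P (S.coroot β) x • β := by
  rw [hβ.sReflX_eq, wordX_conj_apply, ← hβ.choose_spec, coroot_eq hβ.choose_spec]

lemma IsRoot.sReflX {β γ : S.X} (hβ : S.IsRoot β) (hγ : S.IsRoot γ) :
    S.IsRoot (S.sReflX β γ) := by
  obtain ⟨⟨l, j⟩, rfl⟩ := hγ
  rw [hβ.sReflX_eq, ← wordX_append_apply]
  exact S.isRoot_wordX_α _ j

lemma IsRoot.pair_coroot_sReflX {β : S.X} (hβ : S.IsRoot β) (x : S.X) :
    S.P (S.coroot β) (S.sReflX β x) = -S.P (S.coroot β) x := by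
  rw [hβ.sReflX_apply, map_sub, map_smul, hβ.pair_coroot_self, smul_eq_mul]
  ring

lemma IsRoot.sReflX_sReflX {β : S.X} (hβ : S.IsRoot β) (x : S.X) :
    S.sReflX β (S.sReflX β x) = x := by
  rw [hβ.sReflX_apply (S.sReflX β x), hβ.pair_coroot_sReflX, hβ.sReflX_apply]
  module

lemma IsRoot.sReflX_reflX {β : S.X} (hβ : S.IsRoot β) (i : I) (x : S.X) :
    S.sReflX (S.reflX i β) x = S.reflX i (S.sReflX β (S.reflX i x)) := by
  rw [(hβ.reflX i).sReflX_apply, hβ.sReflX_apply, hβ.coroot_reflX, pair_reflY, map_sub,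
    map_smul, reflX_reflX]

/-- Here `s_β (α i) = α i - ⟨β∨, α i⟩ β`. -/
lemma IsPosRoot.isNegRoot_sReflX_α_iff {β : S.X} (hβ : S.IsPosRoot β) {i : I}
    (hβi : β ≠ S.α i) : S.IsNegRoot (S.sReflX β (S.α i)) ↔ 0 < S.P (S.coroot β) (S.α i) := by
  have hroot := hβ.1.sReflX (S.isRoot_α i)
  rw [hβ.1.sReflX_apply]
  constructor
  · intro hneg
    by_contra! ht
    refine (isNegRoot_iff.mp hneg).1.ne_zero (S.eq_zero_of_isNonneg_of_isNonneg_neg ?_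
      (isNegRoot_iff.mp hneg).2)
    rw [sub_eq_add_neg, ← neg_smul]
    exact (S.isNonneg_α i).add (hβ.isNonneg.smul (neg_nonneg.mpr ht))
  · intro ht
    rw [hβ.1.sReflX_apply] at hroot
    refine hroot.isNegRoot_of_not_isNonneg ?_
    simpa using hβ.not_isNonneg_smul_α_sub_smul hβi 1 ht

end Roots

section Quantum

variable {I : Type} [Fintype I] [DecidableEq I] {S : KMD I}

lemma IsQuantum.pair_α_le_one {β : S.X} (hβ : S.IsQuantum β) {i : I} (hβi : β ≠ S.α i) :
    S.P (S.coroot β) (S.α i) ≤ 1 := by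
  by_contra! ht
  have hmem : S.α i ∈ S.InvSet (S.sReflX β) :=
    ⟨⟨S.isRoot_α i, S.isNonneg_α i⟩, (hβ.1.isNegRoot_sReflX_α_iff hβi).mpr (by omega)⟩
  have := hβ.2 _ hmem (Ne.symm hβi)
  omega

lemma IsQuantum.abs_pair_α_le_one_of_reflX {β : S.X} (hβ : S.IsQuantum β) {i : I}
    (hβ' : S.IsQuantum (S.reflX i β)) : |S.P (S.coroot β) (S.α i)| ≤ 1 := by
  have h₁ := hβ.pair_α_le_one (by simpa using hβ'.1.reflX_ne_α i)
  have h₂ := hβ'.pair_α_le_one (hβ.1.reflX_ne_α i)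
  rw [hβ.1.1.coroot_reflX, pair_reflY, reflX_α_self, map_neg] at h₂
  exact abs_le.mpr ⟨by omega, h₁⟩

/-- An inversion `γ'` of `s_{β'}`, `β' = r_i β`, is either exceptional (`α i`, or sent to `-α i`)
and pairs with `β'∨` like `α i` does, or `r_i γ'` is an inversion of `s_β` with the same
pairing. -/
lemma IsQuantum.reflX {β : S.X} (hβ : S.IsQuantum β) {i : I} (hβi : β ≠ S.α i)
    (ht : |S.P (S.coroot β) (S.α i)| ≤ 1) : S.IsQuantum (S.reflX i β) := by
  set β' := S.reflX i β
  have hβ' : S.IsPosRoot β' := hβ.1.reflX hβi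
  have hβ'i : β' ≠ S.α i := hβ.1.reflX_ne_α i
  have hpair : ∀ x, S.P (S.coroot β') x = S.P (S.coroot β) (S.reflX i x) := fun x => by
    rw [hβ.1.1.coroot_reflX, pair_reflY]
  refine ⟨hβ', fun γ' ⟨hγ', hγ'neg⟩ hγ'β' => ?_⟩
  by_cases hexc : γ' = S.α i ∨ S.sReflX β' γ' = -S.α i
  · have hα : S.IsNegRoot (S.sReflX β' (S.α i)) := by
      rcases hexc with rfl | hexc
      · exact hγ'neg
      · rw [← neg_neg (S.α i), ← hexc, map_neg, hβ'.1.sReflX_sReflX]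
        exact hγ'.neg_isNegRoot
    have hp := (hβ'.isNegRoot_sReflX_α_iff hβ'i).mp hα
    have hp1 : S.P (S.coroot β') (S.α i) = 1 := by
      have := abs_le.mp ht
      rw [hpair, reflX_α_self, map_neg] at hp ⊢
      omega
    rcases hexc with rfl | hexc
    · exact hp1
    · rw [← hβ'.1.sReflX_sReflX γ', hexc, map_neg, map_neg, hβ'.1.pair_coroot_sReflX, neg_neg,
      hp1]
  · rw [not_or] at hexc
    have hγ : S.IsPosRoot (S.reflX i γ') := hγ'.reflX hexc.1
    have hγβ : S.reflX i γ' ≠ β := fun h => hγ'β' (by rw [← reflX_reflX S i γ', h])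
    have hsγ : S.IsNegRoot (S.sReflX β (S.reflX i γ')) := by
      have := hγ'neg.reflX hexc.2
      rwa [hβ.1.1.sReflX_reflX, reflX_reflX] at this
    rw [hpair]
    exact hβ.2 _ ⟨hγ, hsγ⟩ hγβ

end Quantum

open scoped Classical

variable {I : Type} [Fintype I] [DecidableEq I]

/-- For a quantum root `β` and a simple reflection `r_i`, `r_i(β)` is quantum iff
`|⟨β∨, α_i⟩| ≤ 1`. -/
theorem reflect_quantum_iff (S : KMD I) (β : S.X) (i : I) (hβ : S.IsQuantum β) :
    S.IsQuantum (S.reflX i β) ↔ |S.P (S.coroot β) (S.α i)| ≤ 1 := by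
  by_cases hβi : β = S.α i
  · subst hβi
    rw [coroot_α, pair_αv_α_self, reflX_α_self]
    exact iff_of_false (fun h => not_isPosRoot_neg_α i h.1) (by norm_num)
  · exact ⟨hβ.abs_pair_α_le_one_of_reflX, hβ.reflX hβi⟩

end KMD
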